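/- arXiv:1508.03425 — 2 statements merged into one kernel-verified Lean document; each statement's English description precedes it below -/
import Mathlib

section
/- Let c be a positive natural number, let w be a Gauss word of length 2c, and let x be an assignment. Then for every b : Fin (2c), |d_{b+1}(x) − d_b(x)| = 1, where the index b+1 is taken mod 2c (so in particular the first and last entries of the warping degree sequence also differ by exactly 1). This is property (i) of the warping matrix: consecutive entries of each row differ by exactly one, cyclically. -/
namespace Warping

/-- A Gauss word of length `2c`: every letter occurs at exactly two positions. -/
def IsGaussWord (c : ℕ) (w : Fin (2*c) → Fin c) : Prop :=
  ∀ i : Fin c, (Finset.univ.filter (fun j => w j = i)).card = 2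

/-- The cyclic successor of an index. -/
def next {n : ℕ} (b : Fin n) : Fin n :=
  ⟨((b : ℕ) + 1) % n, Nat.mod_lt _ (Nat.lt_of_le_of_lt (Nat.zero_le _) b.isLt)⟩

/-- `j` is the first (smaller) of the two positions of its letter. -/
def isFirst (c : ℕ) (w : Fin (2*c) → Fin c) (j : Fin (2*c)) : Prop :=
  ∀ j' : Fin (2*c), w j' = w j → j ≤ j'

/-- Under the assignment `x`, position `j` is passed under. -/
def passedUnder (c : ℕ) (w : Fin (2*c) → Fin c) (x : Fin c → Bool) (j : Fin (2*c)) : Prop :=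
  (x (w j) = true) ↔ isFirst c w j

/-- Time at which position `j` is met in the cyclic traversal starting at base `b`. -/
def time (c : ℕ) (b j : Fin (2*c)) : ℕ := ((j : ℕ) + 2*c - (b : ℕ)) % (2*c)

/-- The letter `i` is a warping crossing for assignment `x` and base `b`: the position of `i`
met earlier in the cyclic traversal starting at `b` is passed under. -/
def IsWarpingCrossing (c : ℕ) (w : Fin (2*c) → Fin c) (x : Fin c → Bool)
    (b : Fin (2*c)) (i : Fin c) : Prop :=
  ∃ j : Fin (2*c), w j = i ∧ (∀ j' : Fin (2*c), w j' = i → time c b j ≤ time c b j') ∧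
    passedUnder c w x j

open scoped Classical in
/-- The warping degree of the assignment `x` with base point `b`. -/
noncomputable def warpingDegree (c : ℕ) (w : Fin (2*c) → Fin c) (x : Fin c → Bool)
    (b : Fin (2*c)) : ℕ :=
  (Finset.univ.filter (fun i => IsWarpingCrossing c w x b i)).card

/-- The step `d_{b+1}(x) - d_b(x)` of the warping degree sequence. -/
noncomputable def step (c : ℕ) (w : Fin (2*c) → Fin c) (x : Fin c → Bool) (b : Fin (2*c)) : ℤ :=
  (warpingDegree c w x (next b) : ℤ) - (warpingDegree c w x b : ℤ)


/-!
Moving the base from `b` to `b + 1` shifts the traversal time of every position other than `b`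
down by one, so every letter other than `w b` keeps the order of its two positions. The letter
`w b`, on the other hand, is met first at `b` from base `b` and first at its other position from
base `b + 1`; since exactly one of its two positions is passed under, it is a warping crossing for
exactly one of the two bases, and the degree changes by exactly one.
-/

lemma next_eq_add_one {n : ℕ} [NeZero n] (b : Fin n) : next b = b + 1 := by
  ext
  simp [next, Fin.val_add, Nat.add_mod]

section Time

variable {c : ℕ}

lemma time_eq_val_sub (b j : Fin (2*c)) : time c b j = ((j - b : Fin (2*c)) : ℕ) := by
  rw [time, Fin.val_sub]
  congr 1
  omega

lemma time_self (b : Fin (2*c)) : time c b b = 0 := by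
  simp [time]

lemma time_lt (b j : Fin (2*c)) : time c b j < 2*c := by
  rw [time_eq_val_sub]
  exact Fin.isLt _

lemma time_next_add_one {b j : Fin (2*c)} (hjb : j ≠ b) :
    time c (next b) j + 1 = time c b j := by
  have : NeZero (2*c) := ⟨by omega⟩
  have hsub : j - b ≠ 0 := sub_ne_zero.2 hjb
  rw [time_eq_val_sub, time_eq_val_sub, next_eq_add_one, ← sub_sub,
    Fin.val_sub_one_of_ne_zero hsub]
  have := Fin.pos_iff_ne_zero.2 hsub
  omega

lemma time_next_self_add_one (b : Fin (2*c)) : time c (next b) b + 1 = 2*c := by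
  have hc : 1 < 2*c := by have := b.isLt; omega
  have : NeZero (2*c) := ⟨by omega⟩
  have h1 : (1 : Fin (2*c)) ≠ 0 := by rw [Ne, Fin.one_eq_zero_iff]; omega
  rw [time_eq_val_sub, next_eq_add_one, sub_add_cancel_left, Fin.val_neg, if_neg h1,
    Fin.val_one', Nat.mod_eq_of_lt hc]
  omega

end Time

lemma IsGaussWord.exists_partner {c : ℕ} {w : Fin (2*c) → Fin c} (hw : IsGaussWord c w)
    (p : Fin (2*c)) :
    ∃ q, q ≠ p ∧ ∀ j, w j = w p ↔ j = p ∨ j = q := by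
  classical
  obtain ⟨a, b, hab, hpos⟩ := Finset.card_eq_two.1 (hw (w p))
  have hmem : ∀ j, w j = w p ↔ j = a ∨ j = b := fun j => by
    simpa using congrArg (j ∈ ·) hpos
  rcases (hmem p).1 rfl with rfl | rfl
  · exact ⟨b, hab.symm, hmem⟩
  · exact ⟨a, hab, fun j => (hmem j).trans or_comm⟩

section Letter

variable {c : ℕ} {w : Fin (2*c) → Fin c} {x : Fin c → Bool}

lemma isFirst_iff_le {p q : Fin (2*c)} (hpos : ∀ j, w j = w p ↔ j = p ∨ j = q) :
    isFirst c w p ↔ p ≤ q := by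
  refine ⟨fun h => h q ((hpos q).2 (Or.inr rfl)), fun hpq j hj => ?_⟩
  rcases (hpos j).1 hj with rfl | rfl
  exacts [le_rfl, hpq]

lemma passedUnder_iff_not_passedUnder {p q : Fin (2*c)} (hqp : q ≠ p)
    (hpos : ∀ j, w j = w p ↔ j = p ∨ j = q) :
    passedUnder c w x p ↔ ¬ passedUnder c w x q := by
  have hwq : w q = w p := (hpos q).2 (Or.inr rfl)
  have hpos' : ∀ j, w j = w q ↔ j = q ∨ j = p := fun j => by rw [hwq, hpos, or_comm]
  unfold passedUnder
  rw [hwq, isFirst_iff_le hpos, isFirst_iff_le hpos', hqp.le_iff_lt, ← not_le]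
  tauto

lemma isWarpingCrossing_iff_of_time_lt {b j : Fin (2*c)} {i : Fin c} (hj : w j = i)
    (hmin : ∀ j', w j' = i → j' ≠ j → time c b j < time c b j') :
    IsWarpingCrossing c w x b i ↔ passedUnder c w x j := by
  constructor
  · rintro ⟨k, hk, hkmin, hpu⟩
    obtain rfl : k = j := by
      by_contra hkj
      exact absurd (hkmin j hj) (hmin k hk hkj).not_ge
    exact hpu
  · refine fun hpu => ⟨j, hj, fun j' hj' => ?_, hpu⟩
    rcases eq_or_ne j' j with rfl | hj'j
    exacts [le_rfl, (hmin j' hj' hj'j).le]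

lemma isWarpingCrossing_next_iff {b : Fin (2*c)} {i : Fin c} (hi : i ≠ w b) :
    IsWarpingCrossing c w x (next b) i ↔ IsWarpingCrossing c w x b i := by
  have hshift : ∀ j, w j = i → time c (next b) j + 1 = time c b j := by
    rintro j rfl
    exact time_next_add_one fun hjb => hi (congrArg w hjb)
  unfold IsWarpingCrossing
  refine exists_congr fun j => and_congr_right fun hj => and_congr_left fun _ => ?_
  refine forall_congr' fun j' => imp_congr_right fun hj' => ?_
  have := hshift j hj
  have := hshift j' hj'
  omega

end Letter

lemma abs_card_filter_sub_card_filter {α : Type*} [Fintype α] (p q : α → Prop)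
    [DecidablePred p] [DecidablePred q] (a : α) (hne : ∀ i ≠ a, p i ↔ q i)
    (ha : p a ↔ ¬ q a) :
    |((Finset.univ.filter p).card : ℤ) - (Finset.univ.filter q).card| = 1 := by
  have hdiff : ((Finset.univ.filter p).card : ℤ) - (Finset.univ.filter q).card
      = (if p a then 1 else 0) - (if q a then 1 else 0) := by
    simp only [Finset.card_filter, Nat.cast_sum, Nat.cast_ite, Nat.cast_one, Nat.cast_zero,
      ← Finset.sum_sub_distrib]
    exact Finset.sum_eq_single a (fun i _ hia => by simp [hne i hia]) (by simp)
  rw [hdiff]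
  by_cases hqa : q a <;> simp [hqa, ha.2, mt ha.1]

theorem abs_warpingDegree_sub_next_general (c : ℕ) (w : Fin (2*c) → Fin c)
    (hw : IsGaussWord c w) (x : Fin c → Bool) :
    ∀ b : Fin (2*c),
      |(warpingDegree c w x (next b) : ℤ) - (warpingDegree c w x b : ℤ)| = 1 := by
  intro b
  obtain ⟨q, hqb, hpos⟩ := hw.exists_partner b
  have hwq : w q = w b := (hpos q).2 (Or.inr rfl)
  have at_next : IsWarpingCrossing c w x (next b) (w b) ↔ passedUnder c w x q := by
    refine isWarpingCrossing_iff_of_time_lt hwq fun j hj hjq => ?_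
    rw [((hpos j).1 hj).resolve_right hjq]
    have := time_next_add_one hqb
    have := time_next_self_add_one b
    have := time_lt b q
    omega
  have at_base : IsWarpingCrossing c w x b (w b) ↔ passedUnder c w x b := by
    refine isWarpingCrossing_iff_of_time_lt rfl fun j _ hjb => ?_
    rw [time_self, ← time_next_add_one hjb]
    exact Nat.succ_pos _
  classical
  unfold warpingDegree
  refine abs_card_filter_sub_card_filter _ _ (w b) (fun i hi => isWarpingCrossing_next_iff hi) ?_
  rw [at_next, at_base, passedUnder_iff_not_passedUnder hqb hpos, not_not]

/-- Property (i) of the warping matrix: cyclically consecutive entries of each row of the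
warping matrix differ by exactly one. -/
theorem abs_warpingDegree_sub_next (c : ℕ) (hc : 0 < c) (w : Fin (2*c) → Fin c)
    (hw : IsGaussWord c w) (x : Fin c → Bool) :
    ∀ b : Fin (2*c),
      |(warpingDegree c w x (next b) : ℤ) - (warpingDegree c w x b : ℤ)| = 1 :=
  abs_warpingDegree_sub_next_general c w hw x

end Warping
end

section
/- Let c ≥ 1 be a natural number and let w be a Gauss word of length 2c. Then for every base b : Fin (2c), the sum over all 2^c assignments x of d_b(x) equals c · 2^{c−1}. Equivalently, every column sum of the warping matrix equals c · 2^{c−1}. -/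
namespace Warping

/-! The position of a letter met first from the base depends only on `w` and `b`, so whether the
letter is a warping crossing is decided by its own bit `x i` alone. Hence each letter is a
warping crossing for exactly half of the `2^c` assignments, and double counting the pairs
(assignment, warping crossing) gives `c * 2^(c-1)`. -/

open Finset

lemma time_injective (c : ℕ) (b : Fin (2*c)) : Function.Injective (time c b) := by
  have time_eq : ∀ j : Fin (2*c), time c b j = (j + (2*c - b)) % (2*c) := fun j => by
    unfold time; congr 1; omega
  intro j j' h
  rw [time_eq, time_eq] at h
  have := Nat.ModEq.add_right_cancel' _ h
  rwa [Nat.ModEq, Nat.mod_eq_of_lt j.isLt, Nat.mod_eq_of_lt j'.isLt, ← Fin.ext_iff] at this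

lemma exists_first_met (c : ℕ) (w : Fin (2*c) → Fin c) (hw : IsGaussWord c w)
    (b : Fin (2*c)) (i : Fin c) :
    ∃ j, w j = i ∧ ∀ j', w j' = i → time c b j ≤ time c b j' := by
  have hne : (univ.filter (fun j => w j = i)).Nonempty := by
    rw [← card_pos, hw i]; omega
  obtain ⟨j, hj, hmin⟩ := exists_min_image _ (time c b) hne
  exact ⟨j, (mem_filter.1 hj).2, fun j' hj' => hmin j' (mem_filter.2 ⟨mem_univ _, hj'⟩)⟩

open scoped Classical in
lemma isWarpingCrossing_iff (c : ℕ) (w : Fin (2*c) → Fin c) (x : Fin c → Bool)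
    (b : Fin (2*c)) {i : Fin c} {j : Fin (2*c)} (hj : w j = i)
    (hmin : ∀ j', w j' = i → time c b j ≤ time c b j') :
    IsWarpingCrossing c w x b i ↔ x i = decide (isFirst c w j) := by
  have hx : (x i = true ↔ isFirst c w j) ↔ x i = decide (isFirst c w j) := by
    cases x i <;> by_cases isFirst c w j <;> simp [*]
  subst hj
  rw [← hx]
  constructor
  · rintro ⟨j', hj', hmin', hunder⟩
    obtain rfl : j' = j := time_injective c b (le_antisymm (hmin' j rfl) (hmin j' hj'))
    exact hunder
  · exact fun h => ⟨j, rfl, hmin, h⟩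

lemma card_filter_apply_eq (ι : Type*) [Fintype ι] [DecidableEq ι] (i : ι) (v : Bool) :
    #{x : ι → Bool | x i = v} = 2 ^ (Fintype.card ι - 1) := by
  have := Fintype.card_filter_piFinset_const_eq_of_mem (univ : Finset Bool) i (mem_univ v)
  rwa [Fintype.piFinset_univ, card_univ, Fintype.card_bool] at this

open scoped Classical in
lemma card_filter_isWarpingCrossing (c : ℕ) (w : Fin (2*c) → Fin c) (hw : IsGaussWord c w)
    (b : Fin (2*c)) (i : Fin c) :
    #{x : Fin c → Bool | IsWarpingCrossing c w x b i} = 2 ^ (c - 1) := by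
  obtain ⟨j, hj, hmin⟩ := exists_first_met c w hw b i
  simp_rw [isWarpingCrossing_iff c w _ b hj hmin]
  simpa using card_filter_apply_eq (Fin c) i _

theorem sum_warpingDegree_general (c : ℕ) (w : Fin (2*c) → Fin c)
    (hw : IsGaussWord c w) :
    ∀ b : Fin (2*c),
      ∑ x : Fin c → Bool, warpingDegree c w x b = c * 2^(c-1) := by
  intro b
  classical
  calc ∑ x : Fin c → Bool, warpingDegree c w x b
      = ∑ i : Fin c, #{x : Fin c → Bool | IsWarpingCrossing c w x b i} := by
        simp only [warpingDegree]
        exact sum_card_bipartiteAbove_eq_sum_card_bipartiteBelow _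
    _ = c * 2^(c-1) := by
        simp [card_filter_isWarpingCrossing c w hw b]

/-- Every column sum of the warping matrix equals `c * 2^(c-1)`. -/
theorem sum_warpingDegree (c : ℕ) (hc : 1 ≤ c) (w : Fin (2*c) → Fin c)
    (hw : IsGaussWord c w) :
    ∀ b : Fin (2*c),
      ∑ x : Fin c → Bool, warpingDegree c w x b = c * 2^(c-1) :=
  sum_warpingDegree_general c w hw

end Warping
end
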